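/- 0-stability of Euler's method (Lemma 5): under the setup below, for any two sequences of {0,1}^n-valued random variables (Yᵢ) and (Zᵢ) adapted to the filtration (Fᵢ) with Y₀ = Z₀, and for every i ≥ 1, E[‖Yᵢ − Zᵢ‖₁] ≤ K · max_{1≤j≤i} E[‖D(Yⱼ, Yⱼ₋₁, Aⱼ) − D(Zⱼ, Zⱼ₋₁, Aⱼ)‖₁], where K = (e^{LT} − 1)/L and T = i·h. -/

import Mathlib

/-!
Put `e_j = E‖Y_j - Z_j‖₁`. From the definition of `D`,
`Y_j - Z_j = (Y_{j-1} - Z_{j-1}) + h (f(Y_{j-1}, A_j) - f(Z_{j-1}, A_j)) + h (D_Y - D_Z)`.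
The pair `(Y_{j-1}, Z_{j-1})` takes finitely many values and is `F_{j-1}`-measurable, hence
independent of `A_j`, which is distributed as `A_1`; splitting the expectation of the middle term
along the values of the pair reduces it to the expected Lipschitz condition, so
`e_j ≤ (1 + L h) e_{j-1} + h d_j`. Since `e_0 = 0`, the discrete Grönwall argument gives
`e_i ≤ h ∑_{m<i} (1 + L h)^m · max d = ((1 + L h)^i - 1)/L · max d ≤ (e^{L i h} - 1)/L · max d`.
-/

open MeasureTheory ProbabilityTheory Real

/-- View a Boolean infection state as a real number (`true ↦ 1`, `false ↦ 0`). -/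
def boolToR (b : Bool) : ℝ := if b then 1 else 0

/-- The difference operator `D(x', x, a) = (x' - x)/h - f(x, a)`, a vector in `ℝ^n`. -/
noncomputable def eulerD {n : ℕ} {α : Type*} (h : ℝ)
    (f : (Fin n → Bool) → α → Fin n → ℝ)
    (x' x : Fin n → Bool) (a : α) : Fin n → ℝ := fun p =>
  (boolToR (x' p) - boolToR (x p)) / h - f x a p

section FiniteValued

variable {Ω κ β : Type*} {m mΩ : MeasurableSpace Ω} {μ : Measure Ω}
  [Fintype κ] [MeasurableSpace κ] [MeasurableSingletonClass κ] {W : Ω → κ}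

lemma integrable_comp_of_fintype {E : Type*} [NormedAddCommGroup E] (hW : Measurable W)
    {φ : κ → Ω → E} (hφ : ∀ w, Integrable (φ w) μ) :
    Integrable (fun ω => φ (W ω) ω) μ := by
  classical
  have hsum : (fun ω => φ (W ω) ω) = fun ω => ∑ w, (W ⁻¹' {w}).indicator (φ w) ω := by
    ext ω
    simp [Set.indicator_apply, eq_comm]
  rw [hsum]
  exact integrable_finsetSum _ fun w _ => (hφ w).indicator (hW (measurableSet_singleton w))

lemma integral_eq_sum_setIntegral_fiber {E : Type*} [NormedAddCommGroup E] [NormedSpace ℝ E]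
    (hW : Measurable W) {f : Ω → E} (hf : Integrable f μ) :
    ∫ ω, f ω ∂μ = ∑ w, ∫ ω in W ⁻¹' {w}, f ω ∂μ := by
  rw [← integral_iUnion_fintype (fun w => hW (measurableSet_singleton w))
    (pairwise_disjoint_fiber W) fun w => hf.integrableOn,
    Set.eq_univ_of_forall fun ω => Set.mem_iUnion.2 ⟨W ω, rfl⟩, Measure.restrict_univ]

lemma integral_comp_eq_sum_measureReal (hW : Measurable W) [IsFiniteMeasure μ] (c : κ → ℝ) :
    ∫ ω, c (W ω) ∂μ = ∑ w, μ.real (W ⁻¹' {w}) * c w := by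
  rw [integral_eq_sum_setIntegral_fiber hW
    (integrable_comp_of_fintype hW fun w => integrable_const (c w))]
  refine Finset.sum_congr rfl fun w _ => ?_
  rw [setIntegral_congr_fun (hW (measurableSet_singleton w)) (g := fun _ => c w)
    (fun ω hω => by rw [hω]), setIntegral_const, smul_eq_mul]

lemma ProbabilityTheory.Indep.integral_comp_eq_sum [MeasurableSpace β] (hm : m ≤ mΩ)
    {X : Ω → β} (hind : Indep m (MeasurableSpace.comap X ‹_›) μ) (hX : AEMeasurable X μ)
    (hW : Measurable[m] W) {g : κ → β → ℝ} (hg : ∀ w, AEStronglyMeasurable (g w) (μ.map X))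
    (hgX : ∀ w, Integrable (fun ω => g w (X ω)) μ) :
    ∫ ω, g (W ω) (X ω) ∂μ = ∑ w, μ.real (W ⁻¹' {w}) * ∫ ω, g w (X ω) ∂μ := by
  have hW' : Measurable W := hW.mono hm le_rfl
  rw [integral_eq_sum_setIntegral_fiber hW' (integrable_comp_of_fintype hW' fun w => hgX w)]
  refine Finset.sum_congr rfl fun w _ => ?_
  rw [setIntegral_congr_fun (hW' (measurableSet_singleton w)) (g := fun ω => g w (X ω))
    (fun ω hω => by rw [hω]),
    hind.setIntegral_eq_mul hm hX (hW (measurableSet_singleton w)) (hg w)]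

lemma ProbabilityTheory.Indep.integral_comp_le [IsFiniteMeasure μ] [MeasurableSpace β]
    (hm : m ≤ mΩ) {X : Ω → β} (hind : Indep m (MeasurableSpace.comap X ‹_›) μ)
    (hX : AEMeasurable X μ) (hW : Measurable[m] W) {g : κ → β → ℝ}
    (hg : ∀ w, AEStronglyMeasurable (g w) (μ.map X))
    (hgX : ∀ w, Integrable (fun ω => g w (X ω)) μ) {c : κ → ℝ}
    (hc : ∀ w, ∫ ω, g w (X ω) ∂μ ≤ c w) :
    ∫ ω, g (W ω) (X ω) ∂μ ≤ ∫ ω, c (W ω) ∂μ := by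
  rw [hind.integral_comp_eq_sum hm hX hW hg hgX,
    integral_comp_eq_sum_measureReal (hW.mono hm le_rfl)]
  gcongr with w
  exact hc w

end FiniteValued

lemma indep_iSup_comap_Icc_succ {Ω α : Type*} [MeasurableSpace Ω] {μ : Measure Ω}
    [mα : MeasurableSpace α] {A : ℕ → Ω → α} (hA : ∀ i, Measurable (A (i + 1)))
    (hind : iIndepFun (fun i => A (i + 1)) μ) (k : ℕ) :
    Indep (⨆ j ∈ Finset.Icc 1 k, mα.comap (A j)) (mα.comap (A (k + 1))) μ := by
  have H := indep_iSup_of_disjoint (fun i => (hA i).comap_le) hind.iIndep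
    (S := Set.Iio k) (T := {k}) (by simp)
  refine indep_of_indep_of_le_right (indep_of_indep_of_le_left H ?_) (le_iSup₂_of_le k rfl le_rfl)
  refine iSup₂_le fun j hj => le_iSup₂_of_le (j - 1) ?_ ?_
  · rw [Finset.mem_Icc] at hj
    exact Set.mem_Iio.2 (by omega)
  · rw [Nat.sub_add_cancel (Finset.mem_Icc.1 hj).1]

section Gronwall

open Finset

lemma le_geom_sum_mul_of_le_mul_add {e : ℕ → ℝ} {q c : ℝ} (hq : 0 ≤ q) (h0 : e 0 ≤ 0) {i : ℕ}
    (hstep : ∀ k < i, e (k + 1) ≤ q * e k + c) : e i ≤ (∑ m ∈ range i, q ^ m) * c := by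
  induction i with
  | zero => simpa using h0
  | succ i ih =>
    calc e (i + 1) ≤ q * e i + c := hstep i i.lt_succ_self
      _ ≤ q * ((∑ m ∈ range i, q ^ m) * c) + c := by
        gcongr
        exact ih fun k hk => hstep k (hk.trans i.lt_succ_self)
      _ = (∑ m ∈ range (i + 1), q ^ m) * c := by rw [geom_sum_succ]; ring

lemma geom_sum_one_add_mul_mul_le {L h : ℝ} (hL : 0 < L) (hh : 0 ≤ h) (i : ℕ) :
    (∑ m ∈ range i, (1 + L * h) ^ m) * h ≤ (exp (L * (i * h)) - 1) / L := by
  have hgeom : (∑ m ∈ range i, (1 + L * h) ^ m) * h = ((1 + L * h) ^ i - 1) / L := by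
    rw [eq_div_iff hL.ne', ← geom_sum_mul]
    ring
  have hpow : (1 + L * h) ^ i ≤ exp (L * (i * h)) := calc
    (1 + L * h) ^ i ≤ exp (L * h) ^ i :=
      pow_le_pow_left₀ (by positivity) (by linarith [add_one_le_exp (L * h)]) i
    _ = exp (L * (i * h)) := by rw [← exp_nat_mul]; ring_nf
  rw [hgeom]
  gcongr

end Gronwall

-- `‖u - v‖₁`: the norm that Mathlib puts on `ι → ℝ` is the sup norm.
def l1Dist {ι : Type*} [Fintype ι] (u v : ι → ℝ) : ℝ := ∑ p, |u p - v p|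

section L1Dist

variable {ι : Type*} [Fintype ι]

lemma l1Dist_nonneg (u v : ι → ℝ) : 0 ≤ l1Dist u v :=
  Finset.sum_nonneg fun _ _ => abs_nonneg _

lemma l1Dist_self (u : ι → ℝ) : l1Dist u u = 0 := by
  simp [l1Dist]

lemma Measurable.l1Dist {β : Type*} [MeasurableSpace β] {u v : β → ι → ℝ} (hu : Measurable u)
    (hv : Measurable v) : Measurable fun b => l1Dist (u b) (v b) :=
  Finset.measurable_sum _ fun p _ =>
    (((measurable_pi_apply p).comp hu).sub ((measurable_pi_apply p).comp hv)).abs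

lemma MeasureTheory.Integrable.l1Dist {Ω : Type*} [MeasurableSpace Ω] {μ : Measure Ω}
    {u v : Ω → ι → ℝ} (hu : Integrable u μ) (hv : Integrable v μ) :
    Integrable (fun ω => l1Dist (u ω) (v ω)) μ :=
  integrable_finsetSum _ fun p _ => ((hu.eval p).sub (hv.eval p)).abs

lemma l1Dist_le_of_euler_step {h : ℝ} (hh : 0 < h) (y z y' z' fy fz : ι → ℝ) :
    l1Dist y' z' ≤ l1Dist y z + h * l1Dist fy fz +
      h * l1Dist (fun p => (y' p - y p) / h - fy p) (fun p => (z' p - z p) / h - fz p) := by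
  simp only [l1Dist, Finset.mul_sum, ← Finset.sum_add_distrib]
  gcongr with p
  calc |y' p - z' p|
      = |(y p - z p) + h * (fy p - fz p) +
          h * ((y' p - y p) / h - fy p - ((z' p - z p) / h - fz p))| := by
        congr 1
        field_simp
        ring
    _ ≤ |y p - z p| + |h * (fy p - fz p)| +
          |h * ((y' p - y p) / h - fy p - ((z' p - z p) / h - fz p))| := abs_add_three _ _ _
    _ = _ := by rw [abs_mul, abs_mul, abs_of_pos hh]

end L1Dist

lemma integral_l1Dist_comp_le_of_indep {Ω α κ ι : Type*} {m mΩ : MeasurableSpace Ω}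
    {μ : Measure Ω} [IsFiniteMeasure μ] [MeasurableSpace α] [Fintype κ] [MeasurableSpace κ]
    [MeasurableSingletonClass κ] [Fintype ι] {L : ℝ} {f : κ → α → ι → ℝ}
    (hfmeas : ∀ x, Measurable (f x)) {X : Ω → α} (hX : Measurable X)
    (hfint : ∀ x, Integrable (fun ω => f x (X ω)) μ) {ρ : κ → κ → ℝ}
    (hfLip : ∀ x z, ∫ ω, l1Dist (f x (X ω)) (f z (X ω)) ∂μ ≤ L * ρ x z)
    (hm : m ≤ mΩ) (hind : Indep m (MeasurableSpace.comap X ‹_›) μ) {y z : Ω → κ}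
    (hy : Measurable[m] y) (hz : Measurable[m] z) :
    ∫ ω, l1Dist (f (y ω) (X ω)) (f (z ω) (X ω)) ∂μ ≤ L * ∫ ω, ρ (y ω) (z ω) ∂μ := by
  rw [← integral_const_mul]
  exact hind.integral_comp_le hm hX.aemeasurable (hy.prodMk hz)
    (g := fun w a => l1Dist (f w.1 a) (f w.2 a)) (c := fun w => L * ρ w.1 w.2)
    (fun w => ((hfmeas w.1).l1Dist (hfmeas w.2)).aestronglyMeasurable)
    (fun w => (hfint w.1).l1Dist (hfint w.2)) fun w => hfLip w.1 w.2

lemma integral_l1Dist_le_of_euler_step {Ω α : Type*} {m mΩ : MeasurableSpace Ω}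
    {μ : Measure Ω} [IsFiniteMeasure μ] [MeasurableSpace α] {n : ℕ} {h L : ℝ} (hh : 0 < h)
    {f : (Fin n → Bool) → α → Fin n → ℝ} (hfmeas : ∀ x, Measurable (f x)) {X : Ω → α}
    (hX : Measurable X) (hfint : ∀ x, Integrable (fun ω => f x (X ω)) μ)
    (hfLip : ∀ x z, ∫ ω, l1Dist (f x (X ω)) (f z (X ω)) ∂μ ≤
      L * l1Dist (boolToR ∘ x) (boolToR ∘ z))
    (hm : m ≤ mΩ) (hind : Indep m (MeasurableSpace.comap X ‹_›) μ)
    {y z y' z' : Ω → Fin n → Bool} (hy : Measurable[m] y) (hz : Measurable[m] z)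
    (hy' : Measurable y') (hz' : Measurable z') :
    ∫ ω, l1Dist (boolToR ∘ y' ω) (boolToR ∘ z' ω) ∂μ ≤
      (1 + L * h) * ∫ ω, l1Dist (boolToR ∘ y ω) (boolToR ∘ z ω) ∂μ +
        h * ∫ ω, l1Dist (eulerD h f (y' ω) (y ω) (X ω)) (eulerD h f (z' ω) (z ω) (X ω)) ∂μ := by
  have hy₀ : Measurable y := hy.mono hm le_rfl
  have hz₀ : Measurable z := hz.mono hm le_rfl
  have hE' : Integrable (fun ω => l1Dist (boolToR ∘ y' ω) (boolToR ∘ z' ω)) μ :=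
    integrable_comp_of_fintype (hy'.prodMk hz')
      (φ := fun w _ => l1Dist (boolToR ∘ w.1) (boolToR ∘ w.2)) fun _ => integrable_const _
  have hE : Integrable (fun ω => l1Dist (boolToR ∘ y ω) (boolToR ∘ z ω)) μ :=
    integrable_comp_of_fintype (hy₀.prodMk hz₀)
      (φ := fun w _ => l1Dist (boolToR ∘ w.1) (boolToR ∘ w.2)) fun _ => integrable_const _
  have hF : Integrable (fun ω => l1Dist (f (y ω) (X ω)) (f (z ω) (X ω))) μ :=
    integrable_comp_of_fintype (hy₀.prodMk hz₀)
      (φ := fun w ω => l1Dist (f w.1 (X ω)) (f w.2 (X ω)))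
      fun w => (hfint w.1).l1Dist (hfint w.2)
  have hD : Integrable (fun ω =>
      l1Dist (eulerD h f (y' ω) (y ω) (X ω)) (eulerD h f (z' ω) (z ω) (X ω))) μ :=
    integrable_comp_of_fintype ((hy'.prodMk hy₀).prodMk (hz'.prodMk hz₀))
      (φ := fun w ω => l1Dist (eulerD h f w.1.1 w.1.2 (X ω)) (eulerD h f w.2.1 w.2.2 (X ω)))
      fun w => ((integrable_const _).sub (hfint w.1.2)).l1Dist
        ((integrable_const _).sub (hfint w.2.2))
  calc ∫ ω, l1Dist (boolToR ∘ y' ω) (boolToR ∘ z' ω) ∂μ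
      ≤ ∫ ω, (l1Dist (boolToR ∘ y ω) (boolToR ∘ z ω) +
          h * l1Dist (f (y ω) (X ω)) (f (z ω) (X ω)) +
          h * l1Dist (eulerD h f (y' ω) (y ω) (X ω)) (eulerD h f (z' ω) (z ω) (X ω))) ∂μ :=
        integral_mono hE' ((hE.add (hF.const_mul h)).add (hD.const_mul h)) fun ω =>
          l1Dist_le_of_euler_step hh _ _ _ _ _ _
    _ = ∫ ω, l1Dist (boolToR ∘ y ω) (boolToR ∘ z ω) ∂μ +
          h * ∫ ω, l1Dist (f (y ω) (X ω)) (f (z ω) (X ω)) ∂μ +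
          h * ∫ ω, l1Dist (eulerD h f (y' ω) (y ω) (X ω)) (eulerD h f (z' ω) (z ω) (X ω)) ∂μ := by
        rw [integral_add ?_ (hD.const_mul h), integral_add hE (hF.const_mul h),
          integral_const_mul, integral_const_mul]
        exact hE.add (hF.const_mul h)
    _ ≤ ∫ ω, l1Dist (boolToR ∘ y ω) (boolToR ∘ z ω) ∂μ +
          h * (L * ∫ ω, l1Dist (boolToR ∘ y ω) (boolToR ∘ z ω) ∂μ) +
          h * ∫ ω, l1Dist (eulerD h f (y' ω) (y ω) (X ω)) (eulerD h f (z' ω) (z ω) (X ω)) ∂μ := by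
        gcongr
        exact integral_l1Dist_comp_le_of_indep hfmeas hX hfint hfLip hm hind hy hz
    _ = _ := by ring

theorem euler_zero_stability {Ω : Type*} [MeasureSpace Ω]
    [IsProbabilityMeasure (ℙ : Measure Ω)]
    {α : Type*} [MeasurableSpace α] (n : ℕ) (h L : ℝ) (hh : 0 < h) (hL : 0 < L)
    (A : ℕ → Ω → α)
    (hAmeas : ∀ i : ℕ, Measurable (A (i + 1)))
    (hAindep : iIndepFun (fun i : ℕ => A (i + 1)) ℙ)
    (hAident : ∀ i : ℕ, Measure.map (A (i + 1)) ℙ = Measure.map (A 1) ℙ)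
    (ℱ : Filtration ℕ (inferInstance : MeasurableSpace Ω))
    (hℱ : ∀ i : ℕ, ℱ i = ⨆ j ∈ Finset.Icc 1 i, MeasurableSpace.comap (A j) inferInstance)
    (f : (Fin n → Bool) → α → Fin n → ℝ)
    (hfmeas : ∀ x, Measurable (f x))
    (hfint : ∀ x, Integrable (fun ω => f x (A 1 ω)) ℙ)
    (hfLip : ∀ x z : Fin n → Bool,
      ∫ ω, ∑ p : Fin n, |f x (A 1 ω) p - f z (A 1 ω) p| ∂ℙ ≤
        L * ∑ p : Fin n, |boolToR (x p) - boolToR (z p)|)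
    (Y Z : ℕ → Ω → Fin n → Bool)
    (hYadapted : ∀ i : ℕ, Measurable[ℱ i] (Y i))
    (hZadapted : ∀ i : ℕ, Measurable[ℱ i] (Z i))
    (hYZ0 : Y 0 = Z 0) :
    ∀ i : ℕ, ∀ hi : 1 ≤ i,
      ∫ ω, ∑ p : Fin n, |boolToR (Y i ω p) - boolToR (Z i ω p)| ∂ℙ ≤
        ((Real.exp (L * ((i : ℝ) * h)) - 1) / L) *
          (Finset.Icc 1 i).sup' (Finset.nonempty_Icc.mpr hi) (fun j =>
            ∫ ω, ∑ p : Fin n,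
              |eulerD h f (Y j ω) (Y (j - 1) ω) (A j ω) p -
                eulerD h f (Z j ω) (Z (j - 1) ω) (A j ω) p| ∂ℙ) := by
  intro i hi
  set e : ℕ → ℝ := fun k => ∫ ω, l1Dist (boolToR ∘ Y k ω) (boolToR ∘ Z k ω) ∂ℙ
  set d : ℕ → ℝ := fun j => ∫ ω, ∑ p : Fin n,
      |eulerD h f (Y j ω) (Y (j - 1) ω) (A j ω) p -
        eulerD h f (Z j ω) (Z (j - 1) ω) (A j ω) p| ∂ℙ
  set M := (Finset.Icc 1 i).sup' (Finset.nonempty_Icc.mpr hi) d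
  have hM : 0 ≤ M := Finset.le_sup'_of_le d (Finset.mem_Icc.2 ⟨le_rfl, hi⟩)
    (integral_nonneg fun _ => l1Dist_nonneg _ _)
  have hstep : ∀ k < i, e (k + 1) ≤ (1 + L * h) * e k + h * M := by
    intro k hk
    have hA : IdentDistrib (A (k + 1)) (A 1) ℙ ℙ :=
      ⟨(hAmeas k).aemeasurable, (hAmeas 0).aemeasurable, hAident k⟩
    have hind := indep_iSup_comap_Icc_succ hAmeas hAindep k
    rw [← hℱ k] at hind
    refine (integral_l1Dist_le_of_euler_step hh hfmeas (hAmeas k)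
      (fun x => (hA.comp (hfmeas x)).integrable_iff.2 (hfint x))
      (fun x z => (hA.comp ((hfmeas x).l1Dist (hfmeas z))).integral_eq.trans_le (hfLip x z))
      (ℱ.le k) hind (hYadapted k) (hZadapted k) ((hYadapted (k + 1)).mono (ℱ.le _) le_rfl)
      ((hZadapted (k + 1)).mono (ℱ.le _) le_rfl)).trans ?_
    gcongr
    exact Finset.le_sup' d (Finset.mem_Icc.2 ⟨by omega, hk⟩ : k + 1 ∈ Finset.Icc 1 i)
  calc e i ≤ (∑ m ∈ Finset.range i, (1 + L * h) ^ m) * (h * M) :=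
        le_geom_sum_mul_of_le_mul_add (by positivity) (by simp [e, hYZ0, l1Dist_self]) hstep
    _ = ((∑ m ∈ Finset.range i, (1 + L * h) ^ m) * h) * M := by ring
    _ ≤ _ := by
        gcongr
        exact geom_sum_one_add_mul_mul_le hL hh.le i
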